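/- arXiv:2206.06501 — 5 statements merged into one kernel-verified Lean document; each statement's English description precedes it below -/
import Mathlib

section
/- Let X be a real random variable with E|X| < ∞ and let B ≥ 1 be an integer. The function φ is strictly increasing on [0, ∞): for all 0 ≤ s₁ < s₂, φ(s₁) < φ(s₂). -/
open MeasureTheory
open scoped ProbabilityTheory

/-- Model first derivative of the clipped-quantization MSE:
`φ(s) = (2·4^{−B}/3)·s·P(|X| ≤ s) + 2·E[(s − |X|)·𝟙{|X| > s}]`. -/
noncomputable def phi {Ω : Type*} [MeasureSpace Ω] (X : Ω → ℝ) (B : ℕ) (s : ℝ) : ℝ :=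
  (2 * (4 : ℝ) ^ (-(B : ℤ)) / 3) * s * (ℙ {ω | |X ω| ≤ s}).toReal
    + 2 * ∫ ω in {ω | s < |X ω|}, (s - |X ω|) ∂ℙ

/-- `φ` is strictly increasing on `[0, ∞)`. -/
theorem stmt_2 {Ω : Type*} [MeasureSpace Ω] [IsProbabilityMeasure (ℙ : Measure Ω)]
    (X : Ω → ℝ) (hX : Measurable X) (hint : Integrable X ℙ)
    (B : ℕ) (hB : 1 ≤ B) :
    ∀ s₁ s₂ : ℝ, 0 ≤ s₁ → s₁ < s₂ → phi X B s₁ < phi X B s₂ := by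
  have hmin : ∀ s : ℝ, Integrable (fun ω => min s (|X ω|)) ℙ := by
    intro s
    refine Integrable.mono' ((integrable_const |s|).add hint.abs)
      ((measurable_const.min hX.abs).aestronglyMeasurable)
      (Filter.Eventually.of_forall fun ω => ?_)
    rw [Real.norm_eq_abs]
    show |min s (|X ω|)| ≤ |s| + |X ω|
    rcases le_total s (|X ω|) with h | h
    · rw [min_eq_left h]; have := abs_nonneg (X ω); linarith
    · rw [min_eq_right h, abs_abs]; have := abs_nonneg s; linarith
  have hkey : ∀ s : ℝ, ∫ ω in {ω | s < |X ω|}, (s - |X ω|) ∂ℙ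
      = (∫ ω, min s (|X ω|) ∂ℙ) - ∫ ω, |X ω| ∂ℙ := by
    intro s
    rw [← integral_sub (hmin s) hint.abs,
      ← integral_indicator (measurableSet_lt measurable_const hX.abs)]
    congr 1; funext ω
    by_cases h : s < |X ω|
    · simp only [Set.indicator_of_mem (show ω ∈ {ω | s < |X ω|} from h),
        min_eq_left h.le]
    · push_neg at h
      rw [Set.indicator_of_notMem (by simpa using not_lt.mpr h), min_eq_right h]
      ring
  intro s₁ s₂ hs₁ h12
  simp only [phi, hkey]
  set c : ℝ := 2 * (4 : ℝ) ^ (-(B : ℤ)) / 3 with hc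
  have hcpos : 0 < c := by positivity
  have hPle : (ℙ {ω | |X ω| ≤ s₁}).toReal ≤ (ℙ {ω | |X ω| ≤ s₂}).toReal :=
    ENNReal.toReal_mono (measure_ne_top _ _)
      (measure_mono fun ω h => le_trans h h12.le)
  have hMle : (∫ ω, min s₁ (|X ω|) ∂ℙ) ≤ ∫ ω, min s₂ (|X ω|) ∂ℙ :=
    integral_mono (hmin s₁) (hmin s₂) fun ω => min_le_min h12.le le_rfl
  have hP1nn : 0 ≤ (ℙ {ω | |X ω| ≤ s₁}).toReal := ENNReal.toReal_nonneg
  by_cases h0 : ℙ {ω | |X ω| ≤ s₂} = 0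
  · have h01 : ℙ {ω | |X ω| ≤ s₁} = 0 :=
      measure_mono_null (fun ω h => le_trans h h12.le) h0
    have hae : ∀ᵐ ω ∂(ℙ : Measure Ω), s₂ < |X ω| := by
      rw [MeasureTheory.ae_iff]
      simpa [not_lt] using h0
    have hM2 : (∫ ω, min s₂ (|X ω|) ∂ℙ) = s₂ := by
      rw [integral_congr_ae (g := fun _ => s₂)
        (hae.mono fun ω h => min_eq_left h.le)]
      simp
    have hM1 : (∫ ω, min s₁ (|X ω|) ∂ℙ) = s₁ := by
      rw [integral_congr_ae (g := fun _ => s₁)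
        (hae.mono fun ω h => min_eq_left (le_trans h12.le h.le))]
      simp
    rw [h0, h01, hM1, hM2]
    simp only [ENNReal.toReal_zero, mul_zero, zero_mul]
    linarith
  · have hP2pos : 0 < (ℙ {ω | |X ω| ≤ s₂}).toReal :=
      ENNReal.toReal_pos h0 (measure_ne_top _ _)
    have h1 : c * s₁ * (ℙ {ω | |X ω| ≤ s₁}).toReal
        < c * s₂ * (ℙ {ω | |X ω| ≤ s₂}).toReal := by
      calc c * s₁ * (ℙ {ω | |X ω| ≤ s₁}).toReal
          ≤ c * s₁ * (ℙ {ω | |X ω| ≤ s₂}).toReal := by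
            apply mul_le_mul_of_nonneg_left hPle (by positivity)
        _ < c * s₂ * (ℙ {ω | |X ω| ≤ s₂}).toReal := by
            apply mul_lt_mul_of_pos_right _ hP2pos
            exact mul_lt_mul_of_pos_left h12 hcpos
    linarith
end

section
/- Let X be a real random variable with 0 < E|X| < ∞ whose absolute value has an atomless distribution (P(|X| = s) = 0 for every s ≥ 0), and let B ≥ 1 be an integer. Then φ is continuous on [0, ∞), φ(0) = −2·E|X| < 0, φ(s) → +∞ as s → ∞, and there exists a unique s* > 0 with φ(s*) = 0. -/
open MeasureTheory
open scoped ProbabilityTheory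

/-- If `|X|` is atomless and `0 < E|X| < ∞`, then `φ` is continuous on `[0, ∞)`,
`φ(0) = −2·E|X| < 0`, `φ(s) → +∞` as `s → ∞`, and there is a unique `s* > 0`
with `φ(s*) = 0`. -/
theorem stmt_3 {Ω : Type*} [MeasureSpace Ω] [IsProbabilityMeasure (ℙ : Measure Ω)]
    (X : Ω → ℝ) (hX : Measurable X) (hint : Integrable X ℙ)
    (hpos : 0 < ∫ ω, |X ω| ∂ℙ)
    (hatomless : ∀ s : ℝ, 0 ≤ s → ℙ {ω | |X ω| = s} = 0)
    (B : ℕ) (hB : 1 ≤ B) :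
    ContinuousOn (phi X B) (Set.Ici 0) ∧
    phi X B 0 = -2 * ∫ ω, |X ω| ∂ℙ ∧
    phi X B 0 < 0 ∧
    Filter.Tendsto (phi X B) Filter.atTop Filter.atTop ∧
    ∃! s : ℝ, 0 < s ∧ phi X B s = 0 := by
  have habs : Measurable fun ω => |X ω| := hX.abs
  have hintabs : Integrable (fun ω => |X ω|) ℙ := hint.abs
  set c : ℝ := 2 * (4 : ℝ) ^ (-(B : ℤ)) / 3 with hc_def
  have hc : 0 < c := by positivity
  set F : ℝ → ℝ := fun s => (ℙ {ω | |X ω| ≤ s}).toReal with hF_def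
  set g : ℝ → ℝ := fun s => ∫ ω, min (s - |X ω|) 0 ∂ℙ with hg_def
  have hmeasLT : ∀ s : ℝ, MeasurableSet {ω | s < |X ω|} := fun s =>
    measurableSet_lt measurable_const habs
  have hmeasLE : ∀ s : ℝ, MeasurableSet {ω | |X ω| ≤ s} := fun s =>
    measurableSet_le habs measurable_const
  have hgint : ∀ s : ℝ, Integrable (fun ω => min (s - |X ω|) 0) ℙ := fun s =>
    ((integrable_const s).sub hintabs).inf (integrable_const 0)
  have hg_eq : ∀ s : ℝ, (∫ ω in {ω | s < |X ω|}, (s - |X ω|) ∂ℙ) = g s := by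
    intro s
    rw [← integral_indicator (hmeasLT s)]
    refine integral_congr_ae (Filter.Eventually.of_forall fun ω => ?_)
    by_cases h : s < |X ω|
    · simp only [Set.indicator_apply, Set.mem_setOf_eq, if_pos h]
      exact (min_eq_left (by linarith)).symm
    · simp only [Set.indicator_apply, Set.mem_setOf_eq, if_neg h]
      push_neg at h
      exact (min_eq_right (by linarith)).symm
  have hphi : ∀ s : ℝ, phi X B s = c * s * F s + 2 * g s := by
    intro s; rw [phi, hg_eq]
  -- continuity of F
  have hFcont : Continuous F := by
    rw [continuous_iff_continuousAt]
    intro s₀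
    have hae : ∀ᵐ ω ∂(ℙ : Measure Ω), |X ω| ≠ s₀ := by
      rcases le_or_gt 0 s₀ with h | h
      · have := hatomless s₀ h
        rw [ae_iff]
        simpa [Set.setOf_eq_eq_singleton, not_not] using this
      · refine Filter.Eventually.of_forall fun ω => ?_
        exact fun heq => absurd (heq ▸ abs_nonneg (X ω)) (not_le.2 h)
    have hFi : F = fun s => ∫ ω, Set.indicator {ω | |X ω| ≤ s} (1 : Ω → ℝ) ω ∂ℙ :=
      funext fun s => (integral_indicator_one (hmeasLE s)).symm
    rw [hFi]
    refine continuousAt_of_dominated (bound := fun _ => (1:ℝ))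
      (Filter.Eventually.of_forall fun x =>
        ((measurable_one.indicator (hmeasLE x)).aestronglyMeasurable)) ?_ (integrable_const 1) ?_
    · refine Filter.Eventually.of_forall fun x =>
        Filter.Eventually.of_forall fun ω => ?_
      by_cases h : ω ∈ {ω | |X ω| ≤ x}
      · simp [Set.indicator_of_mem h]
      · simp [Set.indicator_of_notMem h]
    · filter_upwards [hae] with ω hω
      rcases lt_or_gt_of_ne hω with h | h
      · refine Filter.EventuallyEq.continuousAt (y := (1:ℝ)) ?_
        filter_upwards [eventually_gt_nhds h] with x hx
        exact Set.indicator_of_mem (le_of_lt hx) 1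
      · refine Filter.EventuallyEq.continuousAt (y := (0:ℝ)) ?_
        filter_upwards [eventually_lt_nhds h] with x hx
        exact Set.indicator_of_notMem (by simpa using not_le.2 hx) 1
  -- continuity of g
  have hgcont : Continuous g := by
    rw [continuous_iff_continuousAt]
    intro s₀
    refine continuousAt_of_dominated (bound := fun ω => |s₀| + 1 + |X ω|)
      (Filter.Eventually.of_forall fun x =>
        (((measurable_const.sub habs).min measurable_const).aestronglyMeasurable)) ?_
      ((integrable_const (|s₀| + 1)).add hintabs) ?_
    · filter_upwards [Metric.ball_mem_nhds s₀ one_pos] with x hx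
      refine Filter.Eventually.of_forall fun ω => ?_
      set a : ℝ := |X ω| with ha
      have h0 : 0 ≤ a := abs_nonneg _
      have h1 : |min (x - a) 0| ≤ |x - a| := by
        calc |min (x - a) 0| ≤ max |x - a| |(0:ℝ)| := abs_min_le_max_abs_abs
          _ = |x - a| := by simp
      have h2 : |x - a| ≤ |x| + a := by
        rw [sub_eq_add_neg]
        refine (abs_add_le _ _).trans ?_
        rw [abs_neg, abs_of_nonneg h0]
      have h3 : |x| ≤ |s₀| + 1 := by
        have hd : |x - s₀| < 1 := by simpa [Real.dist_eq] using hx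
        calc |x| = |x - s₀ + s₀| := by ring_nf
          _ ≤ |x - s₀| + |s₀| := abs_add_le _ _
          _ ≤ |s₀| + 1 := by linarith
      simp only [Real.norm_eq_abs]
      calc |min (x - a) 0| ≤ |x - a| := h1
        _ ≤ |x| + a := h2
        _ ≤ |s₀| + 1 + a := by linarith
    · refine Filter.Eventually.of_forall fun ω => ?_
      exact ((continuous_id.sub continuous_const).min continuous_const).continuousAt
  have hphicont : Continuous (phi X B) := by
    have : Continuous fun s => c * s * F s + 2 * g s := by
      exact (((continuous_const.mul continuous_id).mul hFcont).add
        (continuous_const.mul hgcont))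
    exact this.congr fun s => (hphi s).symm
  -- value at 0
  have hg0 : g 0 = -∫ ω, |X ω| ∂ℙ := by
    have : (fun ω => min ((0:ℝ) - |X ω|) 0) = fun ω => -|X ω| := by
      funext ω
      rw [zero_sub, min_eq_left (by simp [neg_nonpos])]
    rw [hg_def]
    simp only [this]
    rw [integral_neg]
  have hphi0 : phi X B 0 = -2 * ∫ ω, |X ω| ∂ℙ := by
    rw [hphi 0, hg0]; ring
  have hphi0neg : phi X B 0 < 0 := by
    rw [hphi0]; nlinarith
  -- basic facts about F and g
  have hF_nonneg : ∀ s, 0 ≤ F s := fun s => ENNReal.toReal_nonneg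
  have hF_mono : ∀ ⦃s t : ℝ⦄, s ≤ t → F s ≤ F t := by
    intro s t hst
    exact ENNReal.toReal_mono (measure_ne_top _ _)
      (measure_mono fun ω h => le_trans h hst)
  have hg_mono : ∀ ⦃s t : ℝ⦄, s ≤ t → g s ≤ g t := by
    intro s t hst
    refine integral_mono (hgint s) (hgint t) fun ω => ?_
    exact min_le_min (by linarith) le_rfl
  have hg_lb : ∀ s : ℝ, 0 ≤ s → -∫ ω, |X ω| ∂ℙ ≤ g s := by
    intro s hs
    rw [← hg0]
    exact hg_mono hs
  -- strict monotonicity on [0, ∞)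
  have hstrict : StrictMonoOn (phi X B) (Set.Ici 0) := by
    intro s hs t ht hst
    simp only [Set.mem_Ici] at hs ht
    rw [hphi s, hphi t]
    by_cases hFs : 0 < F s
    · have h1' : s * F s < t * F t := by
        nlinarith [mul_nonneg ht (sub_nonneg.2 (hF_mono hst.le)),
          mul_pos (sub_pos.2 hst) hFs]
      have h1 : c * s * F s < c * t * F t := by
        rw [mul_assoc, mul_assoc]
        exact mul_lt_mul_of_pos_left h1' hc
      have h2 : g s ≤ g t := hg_mono hst.le
      linarith
    · have hFs0 : F s = 0 := le_antisymm (not_lt.1 hFs) (hF_nonneg s)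
      by_cases hFt : 0 < F t
      · have ht0 : 0 < t := lt_of_le_of_lt hs hst
        have h2 : g s ≤ g t := hg_mono hst.le
        have h3 : 0 < c * t * F t := by positivity
        have h4 : c * s * F s = 0 := by rw [hFs0]; ring
        linarith
      · have hFt0 : F t = 0 := le_antisymm (not_lt.1 hFt) (hF_nonneg t)
        have hmt : ℙ {ω | |X ω| ≤ t} = 0 := by
          have := hFt0
          rw [hF_def] at this
          exact (ENNReal.toReal_eq_zero_iff _).1 this |>.resolve_right (measure_ne_top _ _)
        have hae : ∀ᵐ ω ∂(ℙ : Measure Ω), t < |X ω| := by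
          rw [ae_iff]
          simpa [not_lt] using hmt
        have hgt : g t = t - ∫ ω, |X ω| ∂ℙ := by
          rw [hg_def]
          rw [show (t - ∫ ω, |X ω| ∂ℙ) = ∫ ω, (t - |X ω|) ∂ℙ by
            rw [integral_sub (integrable_const t) hintabs, integral_const]; simp]
          refine integral_congr_ae ?_
          filter_upwards [hae] with ω hω
          exact min_eq_left (by linarith)
        have hgs : g s = s - ∫ ω, |X ω| ∂ℙ := by
          rw [hg_def]
          rw [show (s - ∫ ω, |X ω| ∂ℙ) = ∫ ω, (s - |X ω|) ∂ℙ by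
            rw [integral_sub (integrable_const s) hintabs, integral_const]; simp]
          refine integral_congr_ae ?_
          filter_upwards [hae] with ω hω
          exact min_eq_left (by linarith)
        rw [hFs0, hFt0, hgt, hgs]
        have : 0 ≤ c * t := by positivity
        nlinarith
  -- tendsto atTop
  have htend : Filter.Tendsto (phi X B) Filter.atTop Filter.atTop := by
    have hlin : Filter.Tendsto (fun s : ℝ => c / 2 * s - 2 * ∫ ω, |X ω| ∂ℙ)
        Filter.atTop Filter.atTop := by
      apply Filter.tendsto_atTop_add_const_right
      exact Filter.Tendsto.const_mul_atTop (by positivity) Filter.tendsto_id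
    refine Filter.tendsto_atTop_mono' _ ?_ hlin
    filter_upwards [Filter.eventually_ge_atTop (max (2 * ∫ ω, |X ω| ∂ℙ) 1)] with s hsge
    have hs1 : (1:ℝ) ≤ s := le_trans (le_max_right _ _) hsge
    have hs0 : (0:ℝ) ≤ s := by linarith
    have hsE : 2 * ∫ ω, |X ω| ∂ℙ ≤ s := le_trans (le_max_left _ _) hsge
    -- Markov
    have hmarkov : s * (ℙ {ω | s ≤ |X ω|}).toReal ≤ ∫ ω, |X ω| ∂ℙ :=
      mul_meas_ge_le_integral_of_nonneg
        (Filter.Eventually.of_forall fun ω => abs_nonneg (X ω)) hintabs s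
    have hPle : (ℙ {ω | s < |X ω|}).toReal ≤ (ℙ {ω | s ≤ |X ω|}).toReal :=
      ENNReal.toReal_mono (measure_ne_top _ _)
        (measure_mono fun ω (h : s < |X ω|) => le_of_lt h)
    have hcompl : (ℙ {ω | |X ω| ≤ s}).toReal + (ℙ {ω | s < |X ω|}).toReal = 1 := by
      have hc1 : {ω | s < |X ω|} = {ω | |X ω| ≤ s}ᶜ := by
        ext ω; simp [not_le]
      rw [hc1, ← ENNReal.toReal_add (measure_ne_top _ _) (measure_ne_top _ _),
        measure_add_measure_compl (hmeasLE s), measure_univ, ENNReal.toReal_one]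
    have hFhalf : (1:ℝ)/2 ≤ F s := by
      have h1 : (ℙ {ω | s ≤ |X ω|}).toReal ≤ (∫ ω, |X ω| ∂ℙ) / s := by
        rw [le_div_iff₀ (by linarith)]
        linarith [hmarkov]
      have h2 : (∫ ω, |X ω| ∂ℙ) / s ≤ 1/2 := by
        rw [div_le_iff₀ (by linarith)]
        linarith
      rw [hF_def]
      have := hcompl
      simp only []
      linarith [le_trans hPle (le_trans h1 h2)]
    rw [hphi s]
    have h1 : c / 2 * s ≤ c * s * F s := by
      nlinarith [mul_nonneg (mul_nonneg hc.le hs0) (sub_nonneg.2 hFhalf)]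
    have h2 : -∫ ω, |X ω| ∂ℙ ≤ g s := hg_lb s hs0
    linarith
  refine ⟨hphicont.continuousOn, hphi0, hphi0neg, htend, ?_⟩
  -- existence and uniqueness of root
  obtain ⟨S, hS⟩ := (htend.eventually (Filter.eventually_gt_atTop 0)).and
    (Filter.eventually_ge_atTop (1:ℝ)) |>.exists
  obtain ⟨hSpos, hS1⟩ := hS
  have hS0 : (0:ℝ) ≤ S := by linarith
  have hIVT := intermediate_value_Icc hS0 (hphicont.continuousOn (s := Set.Icc 0 S))
  have h0mem : (0:ℝ) ∈ Set.Icc (phi X B 0) (phi X B S) := ⟨hphi0neg.le, hSpos.le⟩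
  obtain ⟨s', hs'mem, hs'eq⟩ := hIVT h0mem
  have hs'pos : 0 < s' := by
    rcases lt_or_eq_of_le hs'mem.1 with h | h
    · exact h
    · exfalso; rw [← h] at hs'eq; rw [hs'eq] at hphi0neg; exact lt_irrefl 0 hphi0neg
  refine ⟨s', ⟨hs'pos, hs'eq⟩, ?_⟩
  rintro y ⟨hy, hyeq⟩
  exact hstrict.injOn (Set.mem_Ici.2 hy.le) (Set.mem_Ici.2 hs'pos.le)
    (by rw [hyeq, hs'eq])
end

section
/- Let X be a real random variable with 0 < E|X| < ∞ whose absolute value has an atomless distribution, let B ≥ 1 be an integer, and let s* > 0 be the unique root of φ. If J : (0, ∞) → ℝ is any differentiable function whose derivative satisfies J′(s) = φ(s) for all s > 0, then J is strictly convex on (0, ∞) and attains its unique global minimum on (0, ∞) at s = s*. (This captures the paper's claim that OCTAV's fixed point is the global optimum of the convex clipped-quantization MSE.) -/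
open MeasureTheory
open scoped ProbabilityTheory

lemma phi_strictMono {Ω : Type*} [MeasureSpace Ω] [IsProbabilityMeasure (ℙ : Measure Ω)]
    (X : Ω → ℝ) (hX : Measurable X) (hint : Integrable X ℙ) (B : ℕ) :
    StrictMonoOn (phi X B) (Set.Ioi 0) := by
  intro s hs t ht hst
  simp only [Set.mem_Ioi] at hs ht
  set c : ℝ := 2 * (4 : ℝ) ^ (-(B : ℤ)) / 3 with hc
  have hcpos : 0 < c := by positivity
  have hcle2 : c ≤ 2 := by
    have h4 : (4 : ℝ) ^ (-(B : ℤ)) ≤ 1 :=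
      zpow_le_one_of_nonpos₀ (by norm_num) (by simp)
    nlinarith
  have hms : ∀ u : ℝ, MeasurableSet {ω | u < |X ω|} := fun u =>
    measurableSet_lt measurable_const hX.abs
  have hms' : ∀ u : ℝ, MeasurableSet {ω | |X ω| ≤ u} := fun u =>
    measurableSet_le hX.abs measurable_const
  have hI : ∀ u : ℝ, Integrable ({ω | u < |X ω|}.indicator (fun ω => u - |X ω|)) ℙ :=
    fun u => ((integrable_const u).sub hint.abs).indicator (hms u)
  have hset : ∀ u : ℝ, ∫ ω in {ω | u < |X ω|}, (u - |X ω|) ∂ℙ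
      = ∫ ω, ({ω | u < |X ω|}.indicator (fun ω => u - |X ω|)) ω ∂ℙ :=
    fun u => (integral_indicator (hms u)).symm
  set Pt : ℝ := (ℙ {ω | |X ω| ≤ t}).toReal with hPt
  set Ps : ℝ := (ℙ {ω | |X ω| ≤ s}).toReal with hPs
  set Qt : ℝ := (ℙ {ω | t < |X ω|}).toReal with hQt
  have hPtn : 0 ≤ Pt := ENNReal.toReal_nonneg
  have hQtn : 0 ≤ Qt := ENNReal.toReal_nonneg
  have hsum : Pt + Qt = 1 := by
    have hcompl : {ω | t < |X ω|} = {ω | |X ω| ≤ t}ᶜ := by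
      ext ω; simp [not_le]
    have := measure_add_measure_compl (μ := (ℙ : Measure Ω)) (hms' t)
    rw [hPt, hQt, hcompl, ← ENNReal.toReal_add (measure_ne_top _ _) (measure_ne_top _ _), this]
    simp
  have hPsPt : Ps ≤ Pt := by
    apply ENNReal.toReal_mono (measure_ne_top _ _)
    exact measure_mono (fun ω hω => le_trans hω hst.le)
  -- integral comparison
  have hkey : (∫ ω, ({ω | s < |X ω|}.indicator (fun ω => s - |X ω|)) ω ∂ℙ)
      + (t - s) * Qt ≤ ∫ ω, ({ω | t < |X ω|}.indicator (fun ω => t - |X ω|)) ω ∂ℙ := by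
    have hconst : Integrable ({ω | t < |X ω|}.indicator (fun _ : Ω => t - s)) ℙ :=
      (integrable_const (t - s)).indicator (hms t)
    have hmono : ∀ ω, ({ω | s < |X ω|}.indicator (fun ω => s - |X ω|)) ω
        + ({ω | t < |X ω|}.indicator (fun _ => t - s)) ω
        ≤ ({ω | t < |X ω|}.indicator (fun ω => t - |X ω|)) ω := by
      intro ω
      by_cases h1 : t < |X ω|
      · have h2 : s < |X ω| := lt_trans hst h1
        simp only [Set.indicator_of_mem, Set.mem_setOf_eq, h1, h2, if_pos]
        simp [Set.indicator_apply, h1, h2]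
      · simp only [Set.indicator_apply, Set.mem_setOf_eq, h1, if_neg, if_false]
        by_cases h2 : s < |X ω|
        · simp only [h2, if_pos, if_true]
          have : s ≤ |X ω| := h2.le
          simp; linarith
        · simp [h2]
    have := integral_mono ((hI s).add hconst) (hI t) hmono
    simp only [Pi.add_apply] at this
    rw [integral_add (hI s) hconst] at this
    rwa [integral_indicator_const (t - s) (hms t), smul_eq_mul, mul_comm] at this
  show phi X B s < phi X B t
  simp only [phi, ← hc, hset s, hset t, ← hPt, ← hPs]
  nlinarith [mul_nonneg (sub_pos.2 hst).le hQtn, mul_nonneg (sub_pos.2 hst).le hPtn,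
    mul_pos hcpos (sub_pos.2 hst), mul_le_mul_of_nonneg_left hPsPt (mul_pos hcpos hs).le,
    mul_le_mul_of_nonneg_right hcle2 (mul_nonneg (sub_pos.2 hst).le hQtn)]

/-- If `J` is differentiable on `(0, ∞)` with derivative `φ`, and `s* > 0` is the unique
root of `φ`, then `J` is strictly convex on `(0, ∞)` and attains its unique global
minimum on `(0, ∞)` at `s*`. -/
theorem stmt_5 {Ω : Type*} [MeasureSpace Ω] [IsProbabilityMeasure (ℙ : Measure Ω)]
    (X : Ω → ℝ) (hX : Measurable X) (hint : Integrable X ℙ)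
    (hpos : 0 < ∫ ω, |X ω| ∂ℙ)
    (hatomless : ∀ s : ℝ, 0 ≤ s → ℙ {ω | |X ω| = s} = 0)
    (B : ℕ) (hB : 1 ≤ B)
    (sstar : ℝ) (hstar : 0 < sstar) (hroot : phi X B sstar = 0)
    (J : ℝ → ℝ) (hJ : ∀ s : ℝ, 0 < s → HasDerivAt J (phi X B s) s) :
    StrictConvexOn ℝ (Set.Ioi 0) J ∧
    ∀ s : ℝ, 0 < s → s ≠ sstar → J sstar < J s := by
  have hmono := phi_strictMono X hX hint B
  have hcont : ContinuousOn J (Set.Ioi 0) := fun x hx =>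
    ((hJ x hx).continuousAt).continuousWithinAt
  have hconv : StrictConvexOn ℝ (Set.Ioi 0) J := by
    apply StrictMonoOn.strictConvexOn_of_deriv (convex_Ioi 0) hcont
    rw [interior_Ioi]
    intro a ha b hb hab
    rw [(hJ a ha).deriv, (hJ b hb).deriv]
    exact hmono ha hb hab
  refine ⟨hconv, ?_⟩
  intro s hs hne
  rcases lt_or_gt_of_ne hne with h | h
  · obtain ⟨cc, hcc, hcceq⟩ := exists_hasDerivAt_eq_slope J (phi X B) h
      (hcont.mono (fun x hx => lt_of_lt_of_le hs hx.1))
      (fun x hx => hJ x (lt_trans hs hx.1))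
    have hneg : phi X B cc < 0 := by
      rw [← hroot]
      exact hmono (Set.mem_Ioi.2 (lt_trans hs hcc.1)) (Set.mem_Ioi.2 hstar) hcc.2
    rw [hcceq] at hneg
    rcases div_neg_iff.mp hneg with ⟨_, h2⟩ | ⟨h1, _⟩
    · linarith
    · linarith
  · obtain ⟨cc, hcc, hcceq⟩ := exists_hasDerivAt_eq_slope J (phi X B) h
      (hcont.mono (fun x hx => lt_of_lt_of_le hstar hx.1))
      (fun x hx => hJ x (lt_trans hstar hx.1))
    have hposc : 0 < phi X B cc := by
      rw [← hroot]
      exact hmono (Set.mem_Ioi.2 hstar) (Set.mem_Ioi.2 (lt_trans hstar hcc.1)) hcc.1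
    rw [hcceq] at hposc
    rcases div_pos_iff.mp hposc with ⟨h1, h2⟩ | ⟨h1, _⟩
    · linarith
    · linarith
end

section
/- Let x₁, …, x_N be real numbers, at least one of which is nonzero, let B ≥ 1 be an integer, and let s > 0 be such that D(s) := (4^{−B}/3)·#{j : 0 < |x_j| ≤ s} + #{j : |x_j| > s} > 0. Define the empirical derivatives φ_t(s) = (2·4^{−B}/3)·s·#{j : 0 < |x_j| ≤ s} + 2·Σ_{j : |x_j| > s} (s − |x_j|) and ψ_t(s) = (2·4^{−B}/3)·#{j : 0 < |x_j| ≤ s} + 2·#{j : |x_j| > s}. Then ψ_t(s) > 0 and the Newton–Raphson step s − φ_t(s)/ψ_t(s) equals (Σ_{j : |x_j| > s} |x_j|) / D(s). (This is Corollary 1: the OCTAV recursion for a finite tensor, where zero elements are excluded from the discretization count.) -/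
open Finset

/-- Corollary 1 (OCTAV recursion for a finite tensor): with
`φ_t(s) = (2·4^{−B}/3)·s·#{j : 0 < |x_j| ≤ s} + 2·Σ_{j : |x_j| > s} (s − |x_j|)` and
`ψ_t(s) = (2·4^{−B}/3)·#{j : 0 < |x_j| ≤ s} + 2·#{j : |x_j| > s}`, if the denominator
`D(s) = (4^{−B}/3)·#{j : 0 < |x_j| ≤ s} + #{j : |x_j| > s}` is positive, then `ψ_t(s) > 0`
and the Newton–Raphson step `s − φ_t(s)/ψ_t(s)` equals `(Σ_{j : |x_j| > s} |x_j|) / D(s)`. -/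
theorem stmt_6 {N : ℕ} (x : Fin N → ℝ) (hx : ∃ j, x j ≠ 0)
    (B : ℕ) (hB : 1 ≤ B) (s : ℝ) (hs : 0 < s)
    (hD : 0 < ((4 : ℝ) ^ (-(B : ℤ)) / 3) *
        ((Finset.univ.filter fun j => 0 < |x j| ∧ |x j| ≤ s).card : ℝ) +
        ((Finset.univ.filter fun j => s < |x j|).card : ℝ)) :
    0 < (2 * (4 : ℝ) ^ (-(B : ℤ)) / 3) *
        ((Finset.univ.filter fun j => 0 < |x j| ∧ |x j| ≤ s).card : ℝ) +
        2 * ((Finset.univ.filter fun j => s < |x j|).card : ℝ) ∧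
    s - ((2 * (4 : ℝ) ^ (-(B : ℤ)) / 3) * s *
          ((Finset.univ.filter fun j => 0 < |x j| ∧ |x j| ≤ s).card : ℝ) +
          2 * ∑ j ∈ Finset.univ.filter fun j => s < |x j|, (s - |x j|)) /
        ((2 * (4 : ℝ) ^ (-(B : ℤ)) / 3) *
          ((Finset.univ.filter fun j => 0 < |x j| ∧ |x j| ≤ s).card : ℝ) +
          2 * ((Finset.univ.filter fun j => s < |x j|).card : ℝ)) =
      (∑ j ∈ Finset.univ.filter fun j => s < |x j|, |x j|) /
        (((4 : ℝ) ^ (-(B : ℤ)) / 3) *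
          ((Finset.univ.filter fun j => 0 < |x j| ∧ |x j| ≤ s).card : ℝ) +
          ((Finset.univ.filter fun j => s < |x j|).card : ℝ)) := by

  set a : ℝ := (4 : ℝ) ^ (-(B : ℤ)) with ha
  set m : ℝ := ((Finset.univ.filter fun j => 0 < |x j| ∧ |x j| ≤ s).card : ℝ)
  set n : ℝ := ((Finset.univ.filter fun j => s < |x j|).card : ℝ)
  have hsum : (∑ j ∈ Finset.univ.filter fun j => s < |x j|, (s - |x j|))
      = n * s - ∑ j ∈ Finset.univ.filter fun j => s < |x j|, |x j| := by
    rw [Finset.sum_sub_distrib, Finset.sum_const, nsmul_eq_mul]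
  have hψ : (2 * a / 3) * m + 2 * n = 2 * (a / 3 * m + n) := by ring
  have hψpos : 0 < (2 * a / 3) * m + 2 * n := by rw [hψ]; linarith
  refine ⟨hψpos, ?_⟩
  rw [hsum]
  have hD' : a / 3 * m + n ≠ 0 := ne_of_gt hD
  have hne : (2 * a / 3) * m + 2 * n ≠ 0 := ne_of_gt hψpos
  set T : ℝ := ∑ j ∈ Finset.univ.filter fun j => s < |x j|, |x j| with hT
  have hφ : (2 * a / 3) * s * m + 2 * (n * s - T)
      = ((2 * a / 3) * m + 2 * n) * s - 2 * T := by ring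
  rw [hφ, sub_div, mul_comm, mul_div_assoc, div_self hne, mul_one, sub_sub_cancel, hψ,
    mul_div_mul_left T _ (two_ne_zero)]
end

section
/- Let s > 0 and N ≥ 1. For each coordinate k ∈ {1, …, N}, let w_k^{(i)} be a real sequence evolving by the PWL update w_k^{(i+1)} = w_k^{(i)} − η_k^{(i)} · g_k^{(i)} · 𝟙{|w_k^{(i)}| ≤ s} with arbitrary reals η_k^{(i)}, g_k^{(i)}. Define Ñ^{(i)} = #{k : |w_k^{(i)}| ≤ s}, the number of parameters that can be learned at iteration i. Then Ñ^{(i+1)} ≤ Ñ^{(i)} for every i, and if |w_k^{(1)}| > s for at least one k, then Ñ^{(i)} < N for every i. (Proposition 2: convergence stoppage with PWL under static clipping.) -/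
open Finset

/-- Proposition 2 (convergence stoppage with PWL under static clipping): with
`Ñ^{(i)} = #{k : |w_k^{(i)}| ≤ s}` the number of learnable parameters at iteration `i`,
the PWL update `w_k^{(i+1)} = w_k^{(i)} − η_k^{(i)}·g_k^{(i)}·𝟙{|w_k^{(i)}| ≤ s}` makes
`Ñ^{(i)}` non-increasing, and if some coordinate starts (at iteration 1) with magnitude
exceeding `s`, then `Ñ^{(i)} < N` at every iteration `i ≥ 1`. -/
theorem stmt_9 (s : ℝ) (hs : 0 < s) (N : ℕ) (hN : 1 ≤ N)
    (η g w : Fin N → ℕ → ℝ)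
    (hupd : ∀ (k : Fin N) (i : ℕ),
      w k (i + 1) = w k i - η k i * g k i * (if |w k i| ≤ s then (1 : ℝ) else 0)) :
    (∀ i : ℕ,
      (Finset.univ.filter fun k : Fin N => |w k (i + 1)| ≤ s).card ≤
        (Finset.univ.filter fun k : Fin N => |w k i| ≤ s).card) ∧
    ((∃ k : Fin N, s < |w k 1|) →
      ∀ i : ℕ, 1 ≤ i →
        (Finset.univ.filter fun k : Fin N => |w k i| ≤ s).card < N) := by
  have key : ∀ (k : Fin N) (i : ℕ), s < |w k i| → s < |w k (i + 1)| := by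
    intro k i h
    have hnot : ¬ |w k i| ≤ s := not_le.mpr h
    rw [hupd k i, if_neg hnot]
    simpa using h
  constructor
  · intro i
    apply Finset.card_le_card
    intro k hk
    simp only [Finset.mem_filter, Finset.mem_univ, true_and] at hk ⊢
    by_contra hcon
    exact absurd hk (not_le.mpr (key k i (not_le.mp hcon)))
  · rintro ⟨k, hk⟩ i hi
    have hki : s < |w k i| := by
      induction i, hi using Nat.le_induction with
      | base => exact hk
      | succ n hn ih => exact key k n ih
    have hne : (Finset.univ.filter fun k : Fin N => |w k i| ≤ s) ≠ Finset.univ := by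
      intro h
      have := (Finset.mem_filter.mp (h ▸ Finset.mem_univ k)).2
      exact absurd this (not_le.mpr hki)
    have := Finset.card_lt_card (Finset.ssubset_univ_iff.mpr hne)
    simpa [Finset.card_univ] using this
end
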